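/- In the group G₂ presented by generators a, b, c and relators a², b², c², (ab)³, (bc)³, (ac)³, the subgroup H₂ generated by the elements cbca and abac is a normal abelian subgroup of G₂, and the quotient group G₂/H₂ has at most 6 elements (every coset is one of those of id, a, b, ab, ba, aba). -/

import Mathlib

/-!
Write `x = cbca` and `y = abac`. Using only the relations, one checks that conjugation by each
generator maps `x` and `y` to one of `x⁻¹, y⁻¹, xy`, and that `xy = baca = yx`; since the
generators are involutions this makes `H₂ = ⟨x, y⟩` normal, and it is abelian. Modulo `H₂` we
have `c ≡ aba`, so `G₂/H₂` is generated by two involutions `A, B` with `(AB)³ = 1`, and every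
element of such a group is one of `1, A, B, AB, BA, ABA`.
-/

open Subgroup

theorem Set.ncard_le_six {α : Type*} (s₁ s₂ s₃ s₄ s₅ s₆ : α) :
    ({s₁, s₂, s₃, s₄, s₅, s₆} : Set α).ncard ≤ 6 := by
  classical
  simpa [← Set.ncard_coe_finset] using Finset.card_le_six (a := s₁) (b := s₂) (c := s₃)
    (d := s₄) (e := s₅) (f := s₆)

section

variable {G : Type*} [Group G]

theorem inv_eq_self_of_sq_eq_one {x : G} (hx : x ^ 2 = 1) : x⁻¹ = x :=
  inv_eq_of_mul_eq_one_right (sq x ▸ hx)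

theorem mul_mul_eq_of_pow_three {x y : G} (hx : x ^ 2 = 1) (hy : y ^ 2 = 1)
    (hxy : (x * y) ^ 3 = 1) : y * (x * y) = x * (y * x) := by
  have : x * (y * x) * (y * (x * y)) = 1 := by
    rw [← hxy]; simp only [pow_succ, pow_zero, one_mul, mul_assoc]
  simpa [inv_eq_self_of_sq_eq_one hx, inv_eq_self_of_sq_eq_one hy, mul_assoc] using
    eq_inv_of_mul_eq_one_right this

theorem conj_mem_closure_of_forall_mem {s : Set G} {t : G}
    (h : ∀ g ∈ s, t * g * t⁻¹ ∈ closure s) {x : G} (hx : x ∈ closure s) :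
    t * x * t⁻¹ ∈ closure s :=
  (closure_le (K := (closure s).comap (MulAut.conj t).toMonoidHom)).mpr h hx

theorem normal_closure_of_conj_mem {s T : Set G} (hT : closure T = ⊤)
    (hinv : ∀ t ∈ T, t⁻¹ ∈ T) (h : ∀ t ∈ T, ∀ g ∈ s, t * g * t⁻¹ ∈ closure s) :
    (closure s).Normal := by
  refine normalizer_eq_top_iff.mp (top_le_iff.mp (hT ▸ (closure_le _).mpr fun t ht x => ?_))
  refine ⟨conj_mem_closure_of_forall_mem (h t ht), fun hx => ?_⟩
  simpa [mul_assoc] using conj_mem_closure_of_forall_mem (h t⁻¹ (hinv t ht)) hx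

theorem closure_pair_subset {A B : G} (hA : A ^ 2 = 1) (hB : B ^ 2 = 1)
    (hAB : (A * B) ^ 3 = 1) :
    (closure {A, B} : Set G) ⊆ {1, A, B, A * B, B * A, A * B * A} := by
  have hBAB := mul_mul_eq_of_pow_three hA hB hAB
  have hAA (g : G) : A * (A * g) = g := by rw [← mul_assoc, ← sq, hA, one_mul]
  have hBB (g : G) : B * (B * g) = g := by rw [← mul_assoc, ← sq, hB, one_mul]
  have hBABg (g : G) : B * (A * (B * g)) = A * (B * (A * g)) := by
    simpa only [mul_assoc] using congrArg (· * g) hBAB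
  have hinv : ∀ t ∈ ({A, B} : Set G), t⁻¹ = t := by
    simp [inv_eq_self_of_sq_eq_one hA, inv_eq_self_of_sq_eq_one hB]
  have step : ∀ t ∈ ({A, B} : Set G), ∀ y ∈ ({1, A, B, A * B, B * A, A * B * A} : Set G),
      t * y ∈ ({1, A, B, A * B, B * A, A * B * A} : Set G) := by
    simp only [Set.forall_mem_insert, Set.mem_singleton_iff, forall_eq]
    simp [← sq, hA, hB, hAA, hBB, hBABg, hBAB, mul_assoc]
  intro x hx
  induction hx using closure_induction_left with
  | one => simp
  | mul_left t ht y _ hy => exact step t ht y hy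
  | inv_mul_cancel t ht y _ hy => rw [hinv t ht]; exact step t ht y hy

/-- The defining relations of the `(3, 3, 3)` triangle group, the affine Weyl group of type
`Ã₂`. -/
structure TriangleRelations (a b c : G) : Prop where
  sq_a : a ^ 2 = 1
  sq_b : b ^ 2 = 1
  sq_c : c ^ 2 = 1
  pow_three_ab : (a * b) ^ 3 = 1
  pow_three_bc : (b * c) ^ 3 = 1
  pow_three_ac : (a * c) ^ 3 = 1

namespace TriangleRelations

variable {a b c : G} (h : TriangleRelations a b c)
include h

theorem conj_eq_and_commute :
    a * (c * b * c * a) * a⁻¹ = (c * b * c * a)⁻¹ ∧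
    a * (a * b * a * c) * a⁻¹ = c * b * c * a * (a * b * a * c) ∧
    b * (c * b * c * a) * b⁻¹ = (a * b * a * c)⁻¹ ∧
    b * (a * b * a * c) * b⁻¹ = (c * b * c * a)⁻¹ ∧
    c * (c * b * c * a) * c⁻¹ = c * b * c * a * (a * b * a * c) ∧
    c * (a * b * a * c) * c⁻¹ = (a * b * a * c)⁻¹ ∧
    c * b * c * a * (a * b * a * c) = a * b * a * c * (c * b * c * a) := by
  have ha : a * a = 1 := sq a ▸ h.sq_a
  have hb : b * b = 1 := sq b ▸ h.sq_b
  have hc : c * c = 1 := sq c ▸ h.sq_c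
  have hab := mul_mul_eq_of_pow_three h.sq_a h.sq_b h.pow_three_ab
  have hbc := mul_mul_eq_of_pow_three h.sq_b h.sq_c h.pow_three_bc
  have hac := mul_mul_eq_of_pow_three h.sq_a h.sq_c h.pow_three_ac
  have haa (g : G) : a * (a * g) = g := by rw [← mul_assoc, ha, one_mul]
  have hbb (g : G) : b * (b * g) = g := by rw [← mul_assoc, hb, one_mul]
  have hbab (g : G) : b * (a * (b * g)) = a * (b * (a * g)) := by
    simpa only [mul_assoc] using congrArg (· * g) hab
  have hcbc (g : G) : c * (b * (c * g)) = b * (c * (b * g)) := by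
    simpa only [mul_assoc] using congrArg (· * g) hbc
  -- Word normalisation: cancel squares and orient the braid relations as
  -- `bab → aba`, `cbc → bcb`, `cac → aca`.
  refine ⟨?_, ?_, ?_, ?_, ?_, ?_, ?_⟩ <;>
    simp only [mul_inv_rev, inv_eq_self_of_sq_eq_one h.sq_a, inv_eq_self_of_sq_eq_one h.sq_b,
      inv_eq_self_of_sq_eq_one h.sq_c, mul_assoc, haa, hbb, hbab, hcbc, ha, hc, hab, hbc, hac,
      mul_one]

theorem normal_closure (hgen : closure {a, b, c} = ⊤) :
    (closure {c * b * c * a, a * b * a * c}).Normal := by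
  obtain ⟨ha₁, ha₂, hb₁, hb₂, hc₁, hc₂, -⟩ := h.conj_eq_and_commute
  have hx : c * b * c * a ∈ closure {c * b * c * a, a * b * a * c} := subset_closure (by simp)
  have hy : a * b * a * c ∈ closure {c * b * c * a, a * b * a * c} := subset_closure (by simp)
  refine normal_closure_of_conj_mem hgen ?_ ?_
  · simp [inv_eq_self_of_sq_eq_one h.sq_a, inv_eq_self_of_sq_eq_one h.sq_b,
      inv_eq_self_of_sq_eq_one h.sq_c]
  · simp only [Set.forall_mem_insert, Set.mem_singleton_iff, forall_eq]
    rw [ha₁, ha₂, hb₁, hb₂, hc₁, hc₂]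
    exact ⟨⟨inv_mem hx, mul_mem hx hy⟩, ⟨inv_mem hy, inv_mem hx⟩, mul_mem hx hy, inv_mem hy⟩

theorem mul_comm_of_mem_closure {x : G} (hx : x ∈ closure {c * b * c * a, a * b * a * c})
    {y : G} (hy : y ∈ closure {c * b * c * a, a * b * a * c}) : x * y = y * x := by
  obtain ⟨-, -, -, -, -, -, hxy⟩ := h.conj_eq_and_commute
  have := isMulCommutative_closure (k := {c * b * c * a, a * b * a * c}) (by
    simp only [Set.forall_mem_insert, Set.mem_singleton_iff, forall_eq]
    exact ⟨⟨trivial, hxy⟩, hxy.symm, trivial⟩)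
  exact setLike_mul_comm hx hy

theorem exists_coset_rep (hgen : closure {a, b, c} = ⊤)
    (q : G ⧸ closure {c * b * c * a, a * b * a * c}) :
    ∃ g ∈ ({1, a, b, a * b, b * a, a * b * a} : Set G), q = g := by
  have := h.normal_closure hgen
  set f := QuotientGroup.mk' (closure {c * b * c * a, a * b * a * c})
  have hc : f c = f a * f b * f a := by
    have : (a * b * a)⁻¹ * c = a * b * a * c := by
      simp [inv_eq_self_of_sq_eq_one h.sq_a, inv_eq_self_of_sq_eq_one h.sq_b, mul_assoc]
    rw [← map_mul, ← map_mul, eq_comm, QuotientGroup.mk'_apply, QuotientGroup.mk'_apply,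
      QuotientGroup.eq, this]
    exact subset_closure (by simp)
  have hgen' : closure {f a, f b} = ⊤ := by
    rw [eq_top_iff, ← map_top_of_surjective f (QuotientGroup.mk'_surjective _), ← hgen,
      MonoidHom.map_closure, closure_le]
    simp only [Set.image_insert_eq, Set.image_singleton, Set.insert_subset_iff,
      Set.singleton_subset_iff, SetLike.mem_coe, hc]
    exact ⟨subset_closure (by simp), subset_closure (by simp),
      mul_mem (mul_mem (subset_closure (by simp)) (subset_closure (by simp)))
        (subset_closure (by simp))⟩
  have hq := closure_pair_subset (by rw [← map_pow, h.sq_a, map_one])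
    (by rw [← map_pow, h.sq_b, map_one]) (by rw [← map_mul, ← map_pow, h.pow_three_ab, map_one])
    (hgen' ▸ mem_top q : q ∈ closure {f a, f b})
  obtain ⟨g, hg, hgq⟩ : q ∈ f '' {1, a, b, a * b, b * a, a * b * a} := by
    simpa [Set.image_insert_eq] using hq
  exact ⟨g, hg, hgq.symm⟩

theorem card_quotient_le_six (hgen : closure {a, b, c} = ⊤) :
    Nat.card (G ⧸ closure {c * b * c * a, a * b * a * c}) ≤ 6 := by
  have hsurj : Function.Surjective
      (fun g : ({1, a, b, a * b, b * a, a * b * a} : Set G) =>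
        (g : G ⧸ closure {c * b * c * a, a * b * a * c})) := fun q => by
    obtain ⟨g, hg, rfl⟩ := h.exists_coset_rep hgen q
    exact ⟨⟨g, hg⟩, rfl⟩
  calc _ ≤ Nat.card ({1, a, b, a * b, b * a, a * b * a} : Set G) :=
        Nat.card_le_card_of_surjective _ hsurj
    _ ≤ 6 := (Nat.card_coe_set_eq _).trans_le (Set.ncard_le_six ..)

end TriangleRelations

end

theorem closure_of_fin_three_eq_top (rels : Set (FreeGroup (Fin 3))) :
    closure {(PresentedGroup.of 0 : PresentedGroup rels), .of 1, .of 2} = ⊤ := by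
  rw [← PresentedGroup.closure_range_of]
  congr 1
  ext
  simp [Fin.exists_fin_succ, eq_comm]

theorem stmt_8 :
    let G₂ := PresentedGroup
      ({FreeGroup.of 0 ^ 2, FreeGroup.of 1 ^ 2, FreeGroup.of 2 ^ 2,
        (FreeGroup.of 0 * FreeGroup.of 1) ^ 3,
        (FreeGroup.of 1 * FreeGroup.of 2) ^ 3,
        (FreeGroup.of 0 * FreeGroup.of 2) ^ 3} :
        Set (FreeGroup (Fin 3)))
    let a : G₂ := PresentedGroup.of 0
    let b : G₂ := PresentedGroup.of 1
    let c : G₂ := PresentedGroup.of 2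
    let H₂ : Subgroup G₂ := Subgroup.closure {c * b * c * a, a * b * a * c}
    H₂.Normal ∧
    (∀ x ∈ H₂, ∀ y ∈ H₂, x * y = y * x) ∧
    Nat.card (G₂ ⧸ H₂) ≤ 6 ∧
    (∀ x : G₂ ⧸ H₂, ∃ g ∈ ({1, a, b, a * b, b * a, a * b * a} : Set G₂),
      x = (g : G₂ ⧸ H₂)) := by
  intro G₂ a b c H₂
  have h : TriangleRelations a b c := by
    constructor <;> exact PresentedGroup.one_of_mem (by simp)
  have hgen : closure {a, b, c} = ⊤ := closure_of_fin_three_eq_top _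
  exact ⟨h.normal_closure hgen, fun _ hx _ hy => h.mul_comm_of_mem_closure hx hy,
    h.card_quotient_le_six hgen, h.exists_coset_rep hgen⟩
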